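/- Fix d ≥ 2 and let Φ: [0,1]^d → C be the digit-interleaving map into the Cantor set. Then for all x, y in the image of Φ, ‖Φ^{-1}(x) − Φ^{-1}(y)‖_∞ ≤ 2 |x − y|^{log 2 / (d log 3)}. -/

import Mathlib

/-!
`Φ u` is the ternary number whose digits interleave the doubled binary digits of the
coordinates `u p`, so all its ternary digits lie in `{0, 2}`. Such expansions are separated:
if `|Φ u - Φ v| < 3^{-dn}`, the first `dn` ternary digits agree, hence the first `n` binary digits
of every coordinate agree and `‖u - v‖ ≤ 2^{-n}`. Taking `n` largest with
`|x - y| < 3^{-dn}` gives `‖u - v‖ ≤ 2^{-n} ≤ 2 |x - y|^{log 2 / (d log 3)}`.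
-/

open Set Filter Topology MeasureTheory

noncomputable section

/-- The unit cube `[0,1]^d`. -/
def cube (d : ℕ) : Set (Fin d → ℝ) := {x | ∀ p, x p ∈ Set.Icc (0:ℝ) 1}

/-- The Cantor middle-thirds set: reals admitting a ternary expansion with digits in `{0,2}`. -/
def CantorSet : Set ℝ :=
  {y | ∃ t : ℕ → ℕ, (∀ j, t j = 0 ∨ t j = 2) ∧ y = ∑' j : ℕ, (t j : ℝ) / 3 ^ (j + 1)}

/-- `a` assigns to each `x ∈ [0,1]` a fixed binary expansion (`a x j` is the digit `a_{j+1}^x`). -/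
def IsBinaryExp (a : ℝ → ℕ → ℕ) : Prop :=
  ∀ x ∈ Set.Icc (0:ℝ) 1, (∀ j, a x j ≤ 1) ∧ x = ∑' j : ℕ, (a x j : ℝ) / 2 ^ (j + 1)

/-- `φ(x) = ∑_{j≥1} 2 a_j^x 3^{-d(j-1)}`. -/
def phiFun (d : ℕ) (a : ℝ → ℕ → ℕ) (x : ℝ) : ℝ := ∑' j : ℕ, (2 * a x j : ℝ) / 3 ^ (d * j)

/-- `Φ(x_1,…,x_d) = ∑_{p=1}^d 3^{-p} φ(x_p)`. -/
def PhiFun (d : ℕ) (a : ℝ → ℕ → ℕ) (x : Fin d → ℝ) : ℝ :=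
  ∑ p : Fin d, phiFun d a (x p) / 3 ^ ((p : ℕ) + 1)

open Real

/-- `interleave c k = c (k % d) (k / d)`. -/
def interleave {d : ℕ} [NeZero d] {α : Type*} (c : Fin d → ℕ → α) (k : ℕ) : α :=
  c (Nat.divModEquiv d k).2 (Nat.divModEquiv d k).1

@[simp]
lemma interleave_mul_add {d : ℕ} [NeZero d] {α : Type*} (c : Fin d → ℕ → α) (j : ℕ)
    (p : Fin d) : interleave c (j * d + p) = c p j := by
  have h := (Nat.divModEquiv d).apply_symm_apply (j, p)
  rw [Nat.divModEquiv_symm_apply] at h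
  simp only [interleave, h]

lemma ofDigits_interleave {b d : ℕ} [NeZero d] (c : Fin d → ℕ → Fin b) :
    ofDigits (interleave c) =
      ∑ p : Fin d, (∑' j : ℕ, ((c p j : ℕ) : ℝ) / (b : ℝ) ^ (d * j)) / (b : ℝ) ^ ((p : ℕ) + 1) := by
  let e : Fin d × ℕ ≃ ℕ := (Equiv.prodComm _ _).trans (Nat.divModEquiv d).symm
  have he : ∀ q, e q = q.2 * d + q.1 := fun _ => rfl
  have hterm : ∀ q : Fin d × ℕ, ofDigitsTerm (interleave c) (e q) =
      ((c q.1 q.2 : ℕ) : ℝ) / (b : ℝ) ^ (d * q.2) / (b : ℝ) ^ ((q.1 : ℕ) + 1) := by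
    rintro ⟨p, j⟩
    rw [ofDigitsTerm, he, interleave_mul_add, div_div, ← pow_add, div_eq_mul_inv]
    ring_nf
  have hsum : Summable fun q => ofDigitsTerm (interleave c) (e q) :=
    e.summable_iff.2 summable_ofDigitsTerm
  rw [ofDigits, ← e.tsum_eq, hsum.tsum_prod, tsum_fintype]
  refine Finset.sum_congr rfl fun p _ => ?_
  rw [← tsum_div_const]
  exact tsum_congr fun j => hterm (p, j)

lemma inv_pow_succ_le_abs_ofDigits_sub {x y : ℕ → Fin 3} (hx : ∀ i, x i ≠ 1) (hy : ∀ i, y i ≠ 1)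
    {m : ℕ} (hagree : ∀ i < m, x i = y i) (hm : x m ≠ y m) :
    ((3 : ℝ) ^ (m + 1))⁻¹ ≤ |ofDigits x - ofDigits y| := by
  set ε : ℝ := ((3 : ℝ) ^ (m + 1))⁻¹
  set X := ofDigits fun i => x (i + (m + 1))
  set Y := ofDigits fun i => y (i + (m + 1))
  have hlead : |((x m : ℕ) : ℝ) - (y m : ℕ)| = 2 := by
    have := hx m; have := hy m
    generalize x m = a, y m = b at *
    fin_cases a <;> fin_cases b <;> simp_all
  have htail : |X - Y| ≤ 1 :=
    abs_sub_le_of_nonneg_of_le (ofDigits_nonneg _) (ofDigits_le_one _) (ofDigits_nonneg _)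
      (ofDigits_le_one _)
  have hprefix : ∑ i ∈ Finset.range m, ofDigitsTerm x i = ∑ i ∈ Finset.range m, ofDigitsTerm y i :=
    Finset.sum_congr rfl fun i hi => by rw [ofDigitsTerm, ofDigitsTerm, hagree i (by simpa using hi)]
  have hsplit : ofDigits x - ofDigits y = (((x m : ℕ) : ℝ) - (y m : ℕ)) * ε + ε * (X - Y) := by
    rw [ofDigits_eq_sum_add_ofDigits x (m + 1), ofDigits_eq_sum_add_ofDigits y (m + 1),
      Finset.sum_range_succ, Finset.sum_range_succ, hprefix, ofDigitsTerm, ofDigitsTerm]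
    push_cast
    ring
  have hε : 0 < ε := by positivity
  calc ε = 2 * ε - ε * 1 := by ring
    _ ≤ |(((x m : ℕ) : ℝ) - (y m : ℕ)) * ε| - |ε * (X - Y)| := by
        rw [abs_mul, abs_mul, hlead, abs_of_pos hε]
        gcongr
    _ ≤ |ofDigits x - ofDigits y| := by
        simpa [hsplit] using abs_sub_abs_le_abs_sub ((((x m : ℕ) : ℝ) - (y m : ℕ)) * ε) (-(ε * (X - Y)))

lemma eq_of_abs_ofDigits_sub_lt {x y : ℕ → Fin 3} (hx : ∀ i, x i ≠ 1) (hy : ∀ i, y i ≠ 1) {n : ℕ}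
    (h : |ofDigits x - ofDigits y| < ((3 : ℝ) ^ n)⁻¹) : ∀ i < n, x i = y i := by
  intro i
  induction i using Nat.strong_induction_on with
  | _ i ih =>
    intro hi
    by_contra hne
    have hlow := inv_pow_succ_le_abs_ofDigits_sub hx hy (fun j hj => ih j hj (hj.trans hi)) hne
    have hmono : ((3 : ℝ) ^ n)⁻¹ ≤ ((3 : ℝ) ^ (i + 1))⁻¹ := by
      gcongr
      · norm_num
      · exact hi
    linarith

def binaryDigits (a : ℝ → ℕ → ℕ) (x : ℝ) : ℕ → Fin 2 := fun j => Fin.ofNat 2 (a x j)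

lemma val_binaryDigits {a : ℝ → ℕ → ℕ} (ha : IsBinaryExp a) {x : ℝ} (hx : x ∈ Icc (0 : ℝ) 1)
    (j : ℕ) : (binaryDigits a x j : ℕ) = a x j :=
  Nat.mod_eq_of_lt (Nat.lt_succ_of_le ((ha x hx).1 j))

lemma ofDigits_binaryDigits {a : ℝ → ℕ → ℕ} (ha : IsBinaryExp a) {x : ℝ}
    (hx : x ∈ Icc (0 : ℝ) 1) : ofDigits (binaryDigits a x) = x := by
  conv_rhs => rw [(ha x hx).2]
  refine tsum_congr fun j => ?_
  rw [ofDigitsTerm, val_binaryDigits ha hx, div_eq_mul_inv, Nat.cast_ofNat]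

def doubleDigit : Fin 2 → Fin 3 := ![0, 2]

lemma doubleDigit_ne_one (i : Fin 2) : doubleDigit i ≠ 1 := by
  fin_cases i <;> decide

lemma doubleDigit_injective : Function.Injective doubleDigit := by
  decide

lemma cast_doubleDigit (i : Fin 2) : ((doubleDigit i : ℕ) : ℝ) = 2 * (i : ℕ) := by
  fin_cases i <;> norm_num [doubleDigit]

def PhiDigits (d : ℕ) [NeZero d] (a : ℝ → ℕ → ℕ) (u : Fin d → ℝ) : ℕ → Fin 3 :=
  interleave fun p => doubleDigit ∘ binaryDigits a (u p)

lemma PhiDigits_mul_add {d : ℕ} [NeZero d] (a : ℝ → ℕ → ℕ) (u : Fin d → ℝ) (j : ℕ) (p : Fin d) :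
    PhiDigits d a u (j * d + p) = doubleDigit (binaryDigits a (u p) j) :=
  interleave_mul_add _ j p

lemma PhiDigits_ne_one {d : ℕ} [NeZero d] (a : ℝ → ℕ → ℕ) (u : Fin d → ℝ) (k : ℕ) :
    PhiDigits d a u k ≠ 1 :=
  doubleDigit_ne_one (binaryDigits a (u (Nat.divModEquiv d k).2) (Nat.divModEquiv d k).1)

lemma PhiFun_eq_ofDigits {d : ℕ} [NeZero d] {a : ℝ → ℕ → ℕ} (ha : IsBinaryExp a)
    {u : Fin d → ℝ} (hu : u ∈ cube d) : PhiFun d a u = ofDigits (PhiDigits d a u) := by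
  rw [PhiDigits, ofDigits_interleave]
  refine Finset.sum_congr rfl fun p _ => ?_
  simp only [phiFun, Function.comp_apply, cast_doubleDigit, val_binaryDigits ha (hu p),
    Nat.cast_ofNat]

lemma norm_sub_le_of_abs_PhiFun_sub_lt {d : ℕ} [NeZero d] {a : ℝ → ℕ → ℕ} (ha : IsBinaryExp a)
    {u v : Fin d → ℝ} (hu : u ∈ cube d) (hv : v ∈ cube d) {n : ℕ}
    (h : |PhiFun d a u - PhiFun d a v| < ((3 : ℝ) ^ d)⁻¹ ^ n) : ‖u - v‖ ≤ (2 : ℝ)⁻¹ ^ n := by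
  rw [PhiFun_eq_ofDigits ha hu, PhiFun_eq_ofDigits ha hv, inv_pow, ← pow_mul] at h
  have hagree := eq_of_abs_ofDigits_sub_lt (PhiDigits_ne_one a u) (PhiDigits_ne_one a v) h
  refine (pi_norm_le_iff_of_nonneg (by positivity)).2 fun p => ?_
  have hdigits : ∀ j < n, binaryDigits a (u p) j = binaryDigits a (v p) j := fun j hj =>
    doubleDigit_injective <| by
      have hk : j * d + p < d * n := by
        have := p.isLt
        nlinarith
      rw [← PhiDigits_mul_add, ← PhiDigits_mul_add]
      exact hagree _ hk
  calc ‖(u - v) p‖ = |ofDigits (binaryDigits a (u p)) - ofDigits (binaryDigits a (v p))| := by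
        rw [ofDigits_binaryDigits ha (hu p), ofDigits_binaryDigits ha (hv p), Real.norm_eq_abs,
          Pi.sub_apply]
    _ ≤ (2 : ℝ)⁻¹ ^ n := by
        simpa using abs_ofDigits_sub_ofDigits_le hdigits

lemma norm_sub_le_one_of_mem_cube {d : ℕ} {u v : Fin d → ℝ} (hu : u ∈ cube d) (hv : v ∈ cube d) :
    ‖u - v‖ ≤ 1 :=
  (pi_norm_le_iff_of_nonneg zero_le_one).2 fun p =>
    abs_sub_le_of_nonneg_of_le (hu p).1 (hu p).2 (hv p).1 (hv p).2

lemma le_inv_mul_rpow_logb_of_forall_lt_pow {r q s t : ℝ} (hr0 : 0 < r) (hr1 : r < 1)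
    (hq0 : 0 < q) (hq1 : q < 1) (hs : 0 ≤ s) (ht : t ≤ 1)
    (h : ∀ n : ℕ, s < r ^ n → t ≤ q ^ n) : t ≤ q⁻¹ * s ^ logb r q := by
  have hα : 0 < logb r q := logb_pos_of_base_lt_one hr0 hr1 hq0 hq1
  rcases hs.eq_or_lt with rfl | hs
  · have ht0 : t ≤ 0 := ge_of_tendsto' (tendsto_pow_atTop_nhds_zero_of_lt_one hq0.le hq1)
      fun n => h n (pow_pos hr0 n)
    rw [zero_rpow hα.ne', mul_zero]
    exact ht0
  classical
  have hex : ∃ n : ℕ, r ^ (n + 1) ≤ s := by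
    obtain ⟨n, hn⟩ := exists_pow_lt_of_lt_one hs hr1
    exact ⟨n, (pow_le_pow_of_le_one hr0.le hr1.le n.le_succ).trans hn.le⟩
  set n := Nat.find hex
  -- `n` is the last scale with `s < rⁿ`; at `n = 0` the bound `t ≤ 1` takes its place.
  have htn : t ≤ q ^ n := by
    rcases hn : n with _ | k
    · simpa using ht
    · exact h _ (not_le.1 (Nat.find_min hex (by omega)))
  have hsn : q ^ (n + 1) ≤ s ^ logb r q :=
    calc q ^ (n + 1) = (r ^ (n + 1)) ^ logb r q := by
          rw [← rpow_pow_comm hr0.le, rpow_logb hr0 hr1.ne hq0]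
      _ ≤ s ^ logb r q := rpow_le_rpow (by positivity) (Nat.find_spec hex) hα.le
  calc t ≤ q ^ n := htn
    _ = q⁻¹ * q ^ (n + 1) := by rw [pow_succ]; field_simp
    _ ≤ q⁻¹ * s ^ logb r q := by gcongr

theorem stmt5 (d : ℕ) (hd : 2 ≤ d) (a : ℝ → ℕ → ℕ) (ha : IsBinaryExp a) :
    ∀ x ∈ PhiFun d a '' cube d, ∀ y ∈ PhiFun d a '' cube d,
      ‖Function.invFunOn (PhiFun d a) (cube d) x - Function.invFunOn (PhiFun d a) (cube d) y‖
        ≤ 2 * |x - y| ^ (Real.log 2 / (d * Real.log 3)) := by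
  intro x hx y hy
  have : NeZero d := ⟨by omega⟩
  have hexponent : logb ((3 : ℝ) ^ d)⁻¹ 2⁻¹ = Real.log 2 / (d * Real.log 3) := by
    rw [logb, Real.log_inv, Real.log_inv, Real.log_pow, neg_div_neg_eq]
  have hr1 : ((3 : ℝ) ^ d)⁻¹ < 1 := inv_lt_one_of_one_lt₀ (one_lt_pow₀ (by norm_num) (by omega))
  have holder := le_inv_mul_rpow_logb_of_forall_lt_pow (by positivity) hr1 (by norm_num)
    (by norm_num) (abs_nonneg (x - y))
    (norm_sub_le_one_of_mem_cube (Function.invFunOn_mem hx) (Function.invFunOn_mem hy))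
    fun n hn => norm_sub_le_of_abs_PhiFun_sub_lt ha (Function.invFunOn_mem hx)
      (Function.invFunOn_mem hy) (by rwa [Function.invFunOn_eq hx, Function.invFunOn_eq hy])
  rwa [hexponent, inv_inv] at holder

end
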